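/- arXiv:2401.08521 — 2 statements merged into one kernel-verified Lean document; each statement's English description precedes it below -/
import Mathlib

section
/- Let M = [[1, 1], [1, 2]] be the Arnol'd cat map matrix, acting on ℝ², and let ρ₋ = (3 − √5)/2 < 1 be its smaller eigenvalue. Let f, g : ℝ² → ℂ be trigonometric polynomials, i.e. f(x) = Σ_{k ∈ S} c_k·exp(2πi k·x) and g(x) = Σ_{k ∈ S'} d_k·exp(2πi k·x) for finite sets S, S' ⊂ ℤ² and complex coefficients c_k, d_k. Define the correlation function C_n(f, g*) = ∫_{[0,1]²} f(Mⁿx)·conj(g(x)) dx − (∫_{[0,1]²} f(x) dx)·conj(∫_{[0,1]²} g(x) dx). Then there exists a constant K ≥ 0, depending only on f and g, such that |C_n(f, g*)| ≤ K·ρ₋ⁿ for all n ≥ 0. In particular the Arnol'd cat map is exponentially mixing with mixing time 1/log ρ₊, where ρ₊ = (3 + √5)/2. -/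
/-!
In Fourier modes, `e_k ∘ Mⁿ = e_{k Mⁿ}`, so by orthogonality of the characters `e_k` the
correlation of trigonometric polynomials with frequencies in `S`, `S'` only sees the pairs
`(k, l) ∈ S × S'` with `k Mⁿ = l`. The pair `k = l = 0` reproduces `(∫ f) · conj (∫ g)`. For
`k ≠ 0` the orbit `n ↦ k Mⁿ` is injective, because `M` is invertible and no power `Mᵖ`,
`p > 0`, has eigenvalue `1`; so it eventually leaves the finite set `S'` for good. The
correlation therefore vanishes for all large `n`, and an eventually vanishing sequence is
`O(ρⁿ)` for every `ρ > 0`, in particular for `ρ = ρ₋`.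
-/

open Matrix MeasureTheory Filter Finset

noncomputable def fourierExp {ι : Type*} [Fintype ι] (k : ι → ℤ) (x : ι → ℝ) : ℂ :=
  Complex.exp (2 * Real.pi * Complex.I * ((∑ i, (k i : ℝ) * x i : ℝ) : ℂ))

section FourierExp

variable {ι κ : Type*} [Fintype ι] [Fintype κ]

@[fun_prop]
theorem continuous_fourierExp (k : ι → ℤ) : Continuous (fourierExp k) := by
  unfold fourierExp; fun_prop

theorem fourierExp_add (k l : ι → ℤ) (x : ι → ℝ) :
    fourierExp (k + l) x = fourierExp k x * fourierExp l x := by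
  simp only [fourierExp, ← Complex.exp_add, Pi.add_apply, Int.cast_add, add_mul, sum_add_distrib]
  push_cast; ring_nf

theorem conj_fourierExp (k : ι → ℤ) (x : ι → ℝ) :
    starRingEnd ℂ (fourierExp k x) = fourierExp (-k) x := by
  simp only [fourierExp, ← Complex.exp_conj, map_mul, map_ofNat, Complex.conj_ofReal,
    Complex.conj_I, Pi.neg_apply, Int.cast_neg, neg_mul, sum_neg_distrib]
  push_cast; ring_nf

theorem fourierExp_eq_prod (k : ι → ℤ) (x : ι → ℝ) :
    fourierExp k x = ∏ i, Complex.exp (2 * Real.pi * Complex.I * k i * x i) := by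
  rw [fourierExp, ← Complex.exp_sum]
  push_cast
  rw [mul_sum]
  exact congrArg _ (sum_congr rfl fun i _ => by ring)

theorem fourierExp_mulVec (A : Matrix ι κ ℤ) (k : ι → ℤ) (x : κ → ℝ) :
    fourierExp k (A.map (Int.cast : ℤ → ℝ) *ᵥ x) = fourierExp (k ᵥ* A) x := by
  simp only [fourierExp, mulVec, vecMul, dotProduct, map_apply]
  push_cast
  simp only [mul_sum, sum_mul, mul_assoc]
  rw [sum_comm]

theorem integral_exp_two_pi_I_int_mul (m : ℤ) :
    ∫ t in Set.Icc (0 : ℝ) 1, Complex.exp (2 * Real.pi * Complex.I * m * t) =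
      if m = 0 then 1 else 0 := by
  rw [integral_Icc_eq_integral_Ioc, ← intervalIntegral.integral_of_le zero_le_one]
  split_ifs with hm
  · simp [hm]
  · have hc : (2 * Real.pi * Complex.I * m : ℂ) ≠ 0 := by
      simp [Real.pi_ne_zero, Complex.I_ne_zero, hm]
    have hperiod : Complex.exp (2 * Real.pi * Complex.I * m) = 1 := by
      rw [mul_comm]; exact Complex.exp_int_mul_two_pi_mul_I m
    simp [integral_exp_mul_complex hc, hperiod]

theorem integral_fourierExp (k : ι → ℤ) :
    ∫ x in Set.Icc (0 : ι → ℝ) 1, fourierExp k x = if k = 0 then 1 else 0 := by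
  have hvol : volume.restrict (Set.Icc (0 : ι → ℝ) 1) =
      Measure.pi fun _ => volume.restrict (Set.Icc (0 : ℝ) 1) := by
    rw [← Set.pi_univ_Icc, volume_pi, Measure.restrict_pi_pi]; rfl
  simp_rw [fourierExp_eq_prod, hvol]
  rw [integral_fintype_prod_eq_prod
    (fun i (t : ℝ) => Complex.exp (2 * Real.pi * Complex.I * k i * t))]
  simp_rw [integral_exp_two_pi_I_int_mul, Fintype.prod_boole, funext_iff, Pi.zero_apply]

end FourierExp

section TrigPoly

variable {ι α : Type*} [Fintype ι]

theorem integral_sum_mul_fourierExp (S : Finset α) (c : α → ℂ) (e : α → ι → ℤ) :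
    ∫ x in Set.Icc (0 : ι → ℝ) 1, ∑ j ∈ S, c j * fourierExp (e j) x =
      ∑ j ∈ S, c j * if e j = 0 then 1 else 0 := by
  rw [integral_finsetSum S fun j _ => ((continuous_fourierExp _).integrableOn_Icc).const_mul _]
  simp_rw [integral_const_mul, integral_fourierExp]

theorem integral_sum_fourierExp_mulVec_mul_conj (A : Matrix ι ι ℤ) (S S' : Finset (ι → ℤ))
    (c d : (ι → ℤ) → ℂ) :
    ∫ x in Set.Icc (0 : ι → ℝ) 1, (∑ k ∈ S, c k * fourierExp k (A.map (Int.cast : ℤ → ℝ) *ᵥ x)) *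
        starRingEnd ℂ (∑ l ∈ S', d l * fourierExp l x) =
      ∑ k ∈ S, ∑ l ∈ S', c k * starRingEnd ℂ (d l) * if k ᵥ* A = l then 1 else 0 := by
  have hprod : ∀ x : ι → ℝ,
      (∑ k ∈ S, c k * fourierExp k (A.map (Int.cast : ℤ → ℝ) *ᵥ x)) *
          starRingEnd ℂ (∑ l ∈ S', d l * fourierExp l x) =
        ∑ kl ∈ S ×ˢ S', c kl.1 * starRingEnd ℂ (d kl.2) * fourierExp (kl.1 ᵥ* A - kl.2) x := by
    intro x
    rw [map_sum, sum_mul_sum, sum_product]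
    refine sum_congr rfl fun k _ => sum_congr rfl fun l _ => ?_
    rw [map_mul, conj_fourierExp, fourierExp_mulVec, sub_eq_add_neg, fourierExp_add]
    ring
  simp_rw [hprod, integral_sum_mul_fourierExp, sum_product, sub_eq_zero]

end TrigPoly

theorem exists_norm_le_mul_pow_of_eventually_eq_zero {E : Type*} [NormedAddCommGroup E]
    {u : ℕ → E} {ρ : ℝ} (hu : ∀ᶠ n in atTop, u n = 0) (hρ : 0 < ρ) :
    ∃ K : ℝ, 0 ≤ K ∧ ∀ n, ‖u n‖ ≤ K * ρ ^ n := by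
  obtain ⟨N, hN⟩ := eventually_atTop.1 hu
  refine ⟨∑ j ∈ range N, ‖u j‖ / ρ ^ j, sum_nonneg fun j _ => by positivity, fun n => ?_⟩
  rcases lt_or_ge n N with hn | hn
  · rw [← div_le_iff₀ (by positivity)]
    exact single_le_sum (f := fun j => ‖u j‖ / ρ ^ j) (fun j _ => by positivity) (mem_range.2 hn)
  · rw [hN n hn, norm_zero]
    positivity

namespace Matrix

variable {ι R : Type*} [Fintype ι] [DecidableEq ι] [CommRing R] [IsDomain R] {A : Matrix ι ι R}

theorem injective_vecMul_pow (hA : A.det ≠ 0) (hper : ∀ p, 0 < p → (A ^ p - 1).det ≠ 0)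
    {k : ι → R} (hk : k ≠ 0) : Function.Injective fun n : ℕ => k ᵥ* A ^ n := by
  intro m n h
  wlog hmn : m ≤ n generalizing m n
  · exact (this h.symm (le_of_not_ge hmn)).symm
  obtain ⟨p, rfl⟩ := Nat.exists_eq_add_of_le hmn
  by_contra hp
  have hfix : (k ᵥ* A ^ m) ᵥ* (A ^ p - 1) = 0 := by
    rw [vecMul_sub, vecMul_one, vecMul_vecMul, ← pow_add]
    exact sub_eq_zero.2 h.symm
  have hkm := eq_zero_of_vecMul_eq_zero (hper p (by omega)) hfix
  exact hk (eq_zero_of_vecMul_eq_zero (by rw [det_pow]; exact pow_ne_zero m hA) hkm)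

theorem eventually_vecMul_pow_eq_iff (hA : A.det ≠ 0) (hper : ∀ p, 0 < p → (A ^ p - 1).det ≠ 0)
    (k l : ι → R) : ∀ᶠ n in atTop, (k ᵥ* A ^ n = l ↔ k = 0 ∧ l = 0) := by
  by_cases hk : k = 0
  · simp [hk, eq_comm]
  · have := (Nat.cofinite_eq_atTop ▸ (injective_vecMul_pow hA hper hk).tendsto_cofinite).eventually
      (eventually_cofinite_ne l)
    filter_upwards [this] with n hn
    simp [hn, hk]

end Matrix

theorem eventually_correlation_eq_zero {ι : Type*} [Fintype ι] [DecidableEq ι]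
    {A : Matrix ι ι ℤ} (hA : A.det ≠ 0) (hper : ∀ p, 0 < p → (A ^ p - 1).det ≠ 0)
    (S S' : Finset (ι → ℤ)) (c d : (ι → ℤ) → ℂ) :
    ∀ᶠ n in atTop,
      (∫ x in Set.Icc (0 : ι → ℝ) 1,
          (∑ k ∈ S, c k * fourierExp k ((A ^ n).map (Int.cast : ℤ → ℝ) *ᵥ x)) *
            starRingEnd ℂ (∑ l ∈ S', d l * fourierExp l x)) -
        (∫ x in Set.Icc (0 : ι → ℝ) 1, ∑ k ∈ S, c k * fourierExp k x) *
          starRingEnd ℂ (∫ x in Set.Icc (0 : ι → ℝ) 1, ∑ l ∈ S', d l * fourierExp l x) = 0 := by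
  have hcoeff := (eventually_all_finset S).2 fun k _ => (eventually_all_finset S').2 fun l _ =>
    eventually_vecMul_pow_eq_iff hA hper k l
  filter_upwards [hcoeff] with n hn
  simp_rw [integral_sum_fourierExp_mulVec_mul_conj, integral_sum_mul_fourierExp, sub_eq_zero,
    map_sum, sum_mul_sum]
  refine sum_congr rfl fun k hk => sum_congr rfl fun l hl => ?_
  simp only [hn k hk l hl]
  split_ifs <;> simp_all

def catMap : Matrix (Fin 2) (Fin 2) ℤ := !![1, 1; 1, 2]

theorem det_catMap : catMap.det = 1 := by
  simp [catMap, det_fin_two]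

theorem catMap_pow_succ (n : ℕ) :
    ∃ a b : ℤ, 1 ≤ a ∧ 1 ≤ b ∧ catMap ^ (n + 1) = !![a, b; b, a + b] := by
  induction n with
  | zero => exact ⟨1, 1, le_rfl, le_rfl, by simp [catMap]⟩
  | succ n ih =>
    obtain ⟨a, b, ha, hb, h⟩ := ih
    refine ⟨a + b, a + 2 * b, by omega, by omega, ?_⟩
    rw [pow_succ, h, catMap, mul_fin_two]
    ext i j
    fin_cases i <;> fin_cases j <;> simp <;> ring

theorem det_catMap_pow_sub_one_ne_zero {p : ℕ} (hp : 0 < p) : (catMap ^ p - 1).det ≠ 0 := by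
  obtain ⟨n, rfl⟩ := Nat.exists_eq_add_of_lt hp
  obtain ⟨a, b, ha, hb, h⟩ := catMap_pow_succ n
  have hdet : a * (a + b) - b * b = 1 := by
    rw [← det_fin_two_of, ← h, det_pow, det_catMap, one_pow]
  rw [zero_add, h, one_fin_two, det_fin_two]
  simp only [Fin.isValue, Matrix.sub_apply, of_apply, cons_val', cons_val_zero, cons_val_fin_one,
    cons_val_one, sub_zero]
  nlinarith

theorem map_catMap_pow (n : ℕ) :
    (catMap ^ n).map (Int.cast : ℤ → ℝ) = !![(1 : ℝ), 1; 1, 2] ^ n := by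
  have hM : catMap.map (Int.cast : ℤ → ℝ) = !![1, 1; 1, 2] := by
    ext i j
    fin_cases i <;> fin_cases j <;> simp [catMap]
  rw [← hM]
  exact Matrix.map_pow catMap (Int.castRingHom ℝ) n

/-- Exponential mixing of the Arnol'd cat map `M = [[1, 1], [1, 2]]`:
for trigonometric polynomials `f, g` on the torus, the correlation function
`C_n(f, g*) = ∫ f(Mⁿx)·conj(g(x)) dx − (∫ f)·conj(∫ g)` satisfies
`|C_n(f, g*)| ≤ K·ρ₋ⁿ` with `ρ₋ = (3 − √5)/2`, i.e. the mixing time is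
`1/log ρ₊` with `ρ₊ = (3 + √5)/2`. -/
theorem acm_exponential_mixing (f g : (Fin 2 → ℝ) → ℂ)
    (hf : ∃ (S : Finset (Fin 2 → ℤ)) (c : (Fin 2 → ℤ) → ℂ), ∀ x, f x =
      ∑ k ∈ S, c k * Complex.exp
        (2 * Real.pi * Complex.I * ((∑ i, (k i : ℝ) * x i : ℝ) : ℂ)))
    (hg : ∃ (S : Finset (Fin 2 → ℤ)) (c : (Fin 2 → ℤ) → ℂ), ∀ x, g x =
      ∑ k ∈ S, c k * Complex.exp
        (2 * Real.pi * Complex.I * ((∑ i, (k i : ℝ) * x i : ℝ) : ℂ))) :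
    ∃ K : ℝ, 0 ≤ K ∧ ∀ n : ℕ,
      ‖(∫ x in Set.Icc (0 : Fin 2 → ℝ) 1,
            f (((!![(1 : ℝ), 1; 1, 2]) ^ n).mulVec x) * (starRingEnd ℂ) (g x))
          - (∫ x in Set.Icc (0 : Fin 2 → ℝ) 1, f x) *
              (starRingEnd ℂ) (∫ x in Set.Icc (0 : Fin 2 → ℝ) 1, g x)‖
        ≤ K * ((3 - Real.sqrt 5) / 2) ^ n := by
  obtain ⟨S, c, hf⟩ := hf
  obtain ⟨S', d, hg⟩ := hg
  have hρ : 0 < (3 - Real.sqrt 5) / 2 := by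
    have : Real.sqrt 5 < 3 := (Real.sqrt_lt' (by norm_num)).2 (by norm_num)
    linarith
  refine exists_norm_le_mul_pow_of_eventually_eq_zero ?_ hρ
  simp only [hf, hg, ← map_catMap_pow]
  exact eventually_correlation_eq_zero (det_catMap ▸ one_ne_zero)
    (fun _ => det_catMap_pow_sub_one_ne_zero) S S' c d
end

section
/- Let d = 2n and let M be a d×d matrix with integer entries whose real version is symmetric and positive definite, and suppose u₁, …, u_d is an orthonormal basis of ℝ^d with M·u_i = ρ_i·u_i, where every ρ_i > 0. Let S = { i : ρ_i < 1 } be the set of contracting directions, and assume that for every i ∈ S and every nonzero k ∈ ℤ^d one has k·u_i ≠ 0. Then for all trigonometric polynomials f, g : ℝ^d → ℂ (finite sums Σ_{k ∈ S'} c_k·exp(2πi k·x) over finite sets S' ⊂ ℤ^d) there exists a constant K ≥ 0 such that for every r ≥ 0, the correlation function C_r(f, g*) = ∫_{[0,1]^d} f(M^r x)·conj(g(x)) dx − (∫_{[0,1]^d} f dx)·conj(∫_{[0,1]^d} g dx) satisfies |C_r(f, g*)| ≤ K·(∏_{i ∈ S} ρ_i)^r = K·exp(−r·S_KS), where S_KS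 = Σ_{i ∈ S} log(1/ρ_i) = Σ_{i : ρ_i > 1} log ρ_i is the Kolmogorov–Sinai entropy. Hence the lattice of coupled Arnol'd cat maps is exponentially mixing with mixing time 1/S_KS. -/
/-!
The dual of `x ↦ M x` acts on frequencies by `k ↦ Mᵀ k`, so for trigonometric polynomials
`f = ∑ c_k e_k`, `g = ∑ d_l e_l` the correlation `C_r` is the finite sum of `c_k conj(d_l)` over
the pairs with `k ≠ 0` and `(Mᵀ)^r k = l`. If some `ρ_i < 1`, pairing with the eigenvector `u_i`
gives `⟨(Mᵀ)^r k, u_i⟩ = ρ_i^r ⟨k, u_i⟩` with `⟨k, u_i⟩ ≠ 0`, so `r ↦ (Mᵀ)^r k` is injective and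
each pair contributes for at most one `r`: `C_r` vanishes for large `r`, and any geometric rate
`(∏_{ρ_i < 1} ρ_i)^r > 0` bounds it. If no `ρ_i < 1` the product is `1` and the trivial bound
`∑ |c_k| |d_l|` suffices.
-/

open Matrix MeasureTheory

open Filter ComplexConjugate

lemma norm_sum_ite_le {α E : Type*} [SeminormedAddCommGroup E] (s : Finset α) (p : α → Prop)
    [DecidablePred p] (f : α → E) :
    ‖∑ a ∈ s, if p a then f a else 0‖ ≤ ∑ a ∈ s, ‖f a‖ := by
  rw [← Finset.sum_filter]
  exact (norm_sum_le _ _).trans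
    (Finset.sum_le_sum_of_subset_of_nonneg (Finset.filter_subset _ _) fun _ _ _ => norm_nonneg _)

lemma exists_norm_le_mul_pow_of_eventually_eq_zero_s19 {E : Type*} [SeminormedAddGroup E]
    {a : ℕ → E} {p : ℝ} (hp : 0 < p) (ha : ∀ᶠ r in atTop, a r = 0) :
    ∃ K, 0 ≤ K ∧ ∀ r, ‖a r‖ ≤ K * p ^ r := by
  obtain ⟨R, hR⟩ := eventually_atTop.1 ha
  refine ⟨∑ r ∈ Finset.range R, ‖a r‖ / p ^ r, by positivity, fun r => ?_⟩
  rcases lt_or_ge r R with hr | hr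
  · rw [← div_le_iff₀ (pow_pos hp r)]
    exact Finset.single_le_sum (f := fun r => ‖a r‖ / p ^ r) (fun _ _ => by positivity)
      (Finset.mem_range.2 hr)
  · rw [hR r hr, norm_zero]
    positivity

section Torus

variable {ι : Type*} [Fintype ι]

lemma integral_Icc_exp_two_pi_I_int_mul (m : ℤ) :
    ∫ y in Set.Icc (0 : ℝ) 1, Complex.exp (2 * Real.pi * Complex.I * m * y) =
      if m = 0 then 1 else 0 := by
  split_ifs with hm
  · simp [hm]
  have hc : 2 * Real.pi * Complex.I * m ≠ 0 := by simp [Real.pi_ne_zero, hm]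
  rw [integral_Icc_eq_integral_Ioc, ← intervalIntegral.integral_of_le zero_le_one,
    integral_exp_mul_complex hc]
  have h1 : 2 * Real.pi * Complex.I * m * ((1 : ℝ) : ℂ) = m * (2 * Real.pi * Complex.I) := by
    push_cast; ring
  rw [h1, Complex.ofReal_zero, mul_zero, Complex.exp_int_mul_two_pi_mul_I, Complex.exp_zero,
    sub_self, zero_div]

lemma setIntegral_Icc_pi_prod (g : ι → ℝ → ℂ) (a b : ι → ℝ) :
    ∫ x in Set.Icc a b, ∏ i, g i (x i) = ∏ i, ∫ y in Set.Icc (a i) (b i), g i y := by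
  rw [← Set.pi_univ_Icc, volume_pi, Measure.restrict_pi_pi]
  exact integral_fintype_prod_eq_prod _

lemma intCast_map_pow [DecidableEq ι] {R : Type*} [Ring R] (A : Matrix ι ι ℤ) (r : ℕ) :
    (A ^ r).map (Int.cast : ℤ → R) = A.map Int.cast ^ r := by
  simpa using Matrix.map_pow A (Int.castRingHom R) r

lemma pow_mulVec_of_mulVec_eq_smul [DecidableEq ι] {R : Type*} [CommSemiring R]
    {A : Matrix ι ι R} {u : ι → R} {ρ : R} (hu : A *ᵥ u = ρ • u) (r : ℕ) :
    A ^ r *ᵥ u = ρ ^ r • u := by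
  induction r with
  | zero => simp
  | succ r ih => rw [pow_succ', ← mulVec_mulVec, ih, mulVec_smul, hu, smul_smul, pow_succ]

lemma intCast_transpose_mulVec_dotProduct (A : Matrix ι ι ℤ) (k : ι → ℤ) (x : ι → ℝ) :
    (fun t => ((Aᵀ *ᵥ k) t : ℝ)) ⬝ᵥ x =
      (fun t => (k t : ℝ)) ⬝ᵥ (A.map (Int.cast : ℤ → ℝ) *ᵥ x) := by
  have hcast : (fun t => ((Aᵀ *ᵥ k) t : ℝ)) = (A.map (Int.cast : ℤ → ℝ))ᵀ *ᵥ fun t => (k t : ℝ) :=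
    funext fun t => by simp [mulVec, dotProduct]
  rw [hcast, mulVec_transpose, dotProduct_mulVec]

noncomputable def torusChar (k : ι → ℤ) (x : ι → ℝ) : ℂ :=
  Complex.exp (2 * Real.pi * Complex.I * ((∑ t, (k t : ℝ) * x t : ℝ) : ℂ))

noncomputable def trigPoly (S : Finset (ι → ℤ)) (c : (ι → ℤ) → ℂ) (x : ι → ℝ) : ℂ :=
  ∑ k ∈ S, c k * torusChar k x

@[fun_prop]
lemma continuous_torusChar (k : ι → ℤ) : Continuous (torusChar k) := by
  unfold torusChar
  fun_prop

lemma torusChar_mul_conj (k l : ι → ℤ) (x : ι → ℝ) :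
    torusChar k x * conj (torusChar l x) = torusChar (k - l) x := by
  simp only [torusChar, ← Complex.exp_conj, ← Complex.exp_add, Pi.sub_apply, Int.cast_sub,
    sub_mul, Finset.sum_sub_distrib]
  congr 1
  simp only [map_mul, Complex.conj_ofReal, Complex.conj_I, map_ofNat]
  push_cast
  ring

lemma torusChar_mulVec (A : Matrix ι ι ℤ) (k : ι → ℤ) (x : ι → ℝ) :
    torusChar k (A.map (Int.cast : ℤ → ℝ) *ᵥ x) = torusChar (Aᵀ *ᵥ k) x := by
  unfold torusChar
  rw [← dotProduct, ← intCast_transpose_mulVec_dotProduct]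
  rfl

lemma integral_torusChar (m : ι → ℤ) :
    ∫ x in Set.Icc (0 : ι → ℝ) 1, torusChar m x = if m = 0 then 1 else 0 := by
  have hprod (x : ι → ℝ) :
      torusChar m x = ∏ t, Complex.exp (2 * Real.pi * Complex.I * m t * x t) := by
    rw [torusChar, ← Complex.exp_sum]
    push_cast
    rw [Finset.mul_sum]
    exact congrArg _ (Finset.sum_congr rfl fun t _ => by ring)
  simp_rw [hprod,
    setIntegral_Icc_pi_prod (fun t y => Complex.exp (2 * Real.pi * Complex.I * m t * y)),
    Pi.zero_apply, Pi.one_apply, integral_Icc_exp_two_pi_I_int_mul]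
  simp [Finset.prod_boole, funext_iff]

lemma integrableOn_const_mul_torusChar (a : ℂ) (k : ι → ℤ) :
    IntegrableOn (fun x => a * torusChar k x) (Set.Icc (0 : ι → ℝ) 1) :=
  (continuous_const.mul (continuous_torusChar k)).integrableOn_Icc

lemma integral_trigPoly (S : Finset (ι → ℤ)) (c : (ι → ℤ) → ℂ) :
    ∫ x in Set.Icc (0 : ι → ℝ) 1, trigPoly S c x = ∑ k ∈ S, if k = 0 then c k else 0 := by
  simp only [trigPoly]
  rw [integral_finsetSum _ fun k _ => integrableOn_const_mul_torusChar (c k) k]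
  simp only [integral_const_mul, integral_torusChar, mul_ite, mul_one, mul_zero]

lemma integral_trigPoly_mulVec_mul_conj (A : Matrix ι ι ℤ) (S : Finset (ι → ℤ))
    (c : (ι → ℤ) → ℂ) (T : Finset (ι → ℤ)) (d : (ι → ℤ) → ℂ) :
    ∫ x in Set.Icc (0 : ι → ℝ) 1,
        trigPoly S c (A.map (Int.cast : ℤ → ℝ) *ᵥ x) * conj (trigPoly T d x) =
      ∑ q ∈ S ×ˢ T, if Aᵀ *ᵥ q.1 = q.2 then c q.1 * conj (d q.2) else 0 := by
  have hexpand (x : ι → ℝ) :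
      trigPoly S c (A.map (Int.cast : ℤ → ℝ) *ᵥ x) * conj (trigPoly T d x) =
        ∑ q ∈ S ×ˢ T, c q.1 * conj (d q.2) * torusChar (Aᵀ *ᵥ q.1 - q.2) x := by
    simp only [trigPoly, torusChar_mulVec, map_sum, map_mul, Finset.sum_mul_sum,
      Finset.sum_product, ← torusChar_mul_conj]
    exact Finset.sum_congr rfl fun k _ => Finset.sum_congr rfl fun l _ => by ring
  simp_rw [hexpand]
  rw [integral_finsetSum _ fun q _ => integrableOn_const_mul_torusChar _ _]
  simp only [integral_const_mul, integral_torusChar, sub_eq_zero, mul_ite, mul_one, mul_zero]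

lemma trigPoly_correlation_eq [DecidableEq ι] (A : Matrix ι ι ℤ) (S : Finset (ι → ℤ))
    (c : (ι → ℤ) → ℂ) (T : Finset (ι → ℤ)) (d : (ι → ℤ) → ℂ) :
    (∫ x in Set.Icc (0 : ι → ℝ) 1,
        trigPoly S c (A.map (Int.cast : ℤ → ℝ) *ᵥ x) * conj (trigPoly T d x)) -
      (∫ x in Set.Icc (0 : ι → ℝ) 1, trigPoly S c x) *
        conj (∫ x in Set.Icc (0 : ι → ℝ) 1, trigPoly T d x) =
      ∑ q ∈ S ×ˢ T, if Aᵀ *ᵥ q.1 = q.2 ∧ q.1 ≠ 0 then c q.1 * conj (d q.2) else 0 := by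
  rw [integral_trigPoly_mulVec_mul_conj, integral_trigPoly, integral_trigPoly, map_sum,
    Finset.sum_mul_sum, ← Finset.sum_product', ← Finset.sum_sub_distrib]
  refine Finset.sum_congr rfl fun q _ => ?_
  by_cases hk : q.1 = 0 <;> by_cases hl : q.2 = 0 <;> simp [hk, hl, eq_comm]

lemma injective_pow_transpose_mulVec [DecidableEq ι] {A : Matrix ι ι ℤ} {u : ι → ℝ} {ρ : ℝ}
    (hu : A.map (Int.cast : ℤ → ℝ) *ᵥ u = ρ • u) (hρ₀ : 0 < ρ) (hρ₁ : ρ ≠ 1) {k : ι → ℤ}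
    (hk : ∑ t, (k t : ℝ) * u t ≠ 0) :
    Function.Injective fun r : ℕ => (A ^ r)ᵀ *ᵥ k := by
  have hdot (r : ℕ) : (fun t => (((A ^ r)ᵀ *ᵥ k) t : ℝ)) ⬝ᵥ u = ρ ^ r * ∑ t, (k t : ℝ) * u t := by
    rw [intCast_transpose_mulVec_dotProduct, intCast_map_pow, pow_mulVec_of_mulVec_eq_smul hu,
      dotProduct_smul, smul_eq_mul]
    rfl
  intro r s hrs
  apply pow_right_injective₀ hρ₀ hρ₁
  apply mul_right_cancel₀ hk
  simp only at hrs
  rw [← hdot, ← hdot, hrs]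

lemma eventually_pow_transpose_mulVec_ne [DecidableEq ι] {A : Matrix ι ι ℤ} {u : ι → ℝ} {ρ : ℝ}
    (hu : A.map (Int.cast : ℤ → ℝ) *ᵥ u = ρ • u) (hρ₀ : 0 < ρ) (hρ₁ : ρ ≠ 1) {k : ι → ℤ}
    (hk : ∑ t, (k t : ℝ) * u t ≠ 0) (l : ι → ℤ) :
    ∀ᶠ r in atTop, (A ^ r)ᵀ *ᵥ k ≠ l := by
  rw [← Nat.cofinite_eq_atTop]
  exact (injective_pow_transpose_mulVec hu hρ₀ hρ₁ hk).tendsto_cofinite.eventually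
    (eventually_cofinite_ne l)

lemma eventually_sum_ite_pow_transpose_mulVec_eq_zero [DecidableEq ι] {E : Type*}
    [AddCommMonoid E] {A : Matrix ι ι ℤ} {u : ι → ℝ} {ρ : ℝ}
    (hu : A.map (Int.cast : ℤ → ℝ) *ᵥ u = ρ • u) (hρ₀ : 0 < ρ) (hρ₁ : ρ ≠ 1)
    (hirr : ∀ k : ι → ℤ, k ≠ 0 → ∑ t, (k t : ℝ) * u t ≠ 0)
    (P : Finset ((ι → ℤ) × (ι → ℤ))) (w : (ι → ℤ) × (ι → ℤ) → E) :
    ∀ᶠ r in atTop, ∑ q ∈ P, (if (A ^ r)ᵀ *ᵥ q.1 = q.2 ∧ q.1 ≠ 0 then w q else 0) = 0 := by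
  have hne : ∀ q ∈ P, ∀ᶠ r in atTop, ¬((A ^ r)ᵀ *ᵥ q.1 = q.2 ∧ q.1 ≠ 0) := fun q _ => by
    by_cases hq : q.1 = 0
    · exact Eventually.of_forall fun r h => h.2 hq
    · exact (eventually_pow_transpose_mulVec_ne hu hρ₀ hρ₁ (hirr q.1 hq) q.2).mono
        fun r hr h => hr h.1
  filter_upwards [(P.eventually_all).2 hne] with r hr
  exact Finset.sum_eq_zero fun q hq => if_neg (hr q hq)

end Torus

theorem acm_lattice_exponential_mixing_general (n : ℕ)
    (M : Matrix (Fin (2 * n)) (Fin (2 * n)) ℤ)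
    (u : Fin (2 * n) → Fin (2 * n) → ℝ) (ρ : Fin (2 * n) → ℝ)
    (heig : ∀ i, (M.map (Int.cast : ℤ → ℝ)).mulVec (u i) = ρ i • u i)
    (hρpos : ∀ i, 0 < ρ i)
    (hirr : ∀ i, ρ i < 1 → ∀ k : Fin (2 * n) → ℤ, k ≠ 0 →
      (∑ t, (k t : ℝ) * u i t) ≠ 0)
    (f g : (Fin (2 * n) → ℝ) → ℂ)
    (hf : ∃ (S : Finset (Fin (2 * n) → ℤ)) (c : (Fin (2 * n) → ℤ) → ℂ), ∀ x, f x =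
      ∑ k ∈ S, c k * Complex.exp
        (2 * Real.pi * Complex.I * ((∑ t, (k t : ℝ) * x t : ℝ) : ℂ)))
    (hg : ∃ (S : Finset (Fin (2 * n) → ℤ)) (c : (Fin (2 * n) → ℤ) → ℂ), ∀ x, g x =
      ∑ k ∈ S, c k * Complex.exp
        (2 * Real.pi * Complex.I * ((∑ t, (k t : ℝ) * x t : ℝ) : ℂ))) :
    ∃ K : ℝ, 0 ≤ K ∧ ∀ r : ℕ,
      ‖(∫ x in Set.Icc (0 : Fin (2 * n) → ℝ) 1,
            f (((M.map (Int.cast : ℤ → ℝ)) ^ r).mulVec x) * (starRingEnd ℂ) (g x))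
          - (∫ x in Set.Icc (0 : Fin (2 * n) → ℝ) 1, f x) *
              (starRingEnd ℂ) (∫ x in Set.Icc (0 : Fin (2 * n) → ℝ) 1, g x)‖
        ≤ K * (∏ i ∈ Finset.univ.filter (fun i => ρ i < 1), ρ i) ^ r := by
  obtain ⟨S, c, hf⟩ := hf
  obtain ⟨T, d, hg⟩ := hg
  obtain rfl : f = trigPoly S c := funext hf
  obtain rfl : g = trigPoly T d := funext hg
  simp_rw [← intCast_map_pow, trigPoly_correlation_eq]
  by_cases hcontracting : ∃ i, ρ i < 1
  · obtain ⟨i, hi⟩ := hcontracting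
    exact exists_norm_le_mul_pow_of_eventually_eq_zero_s19 (Finset.prod_pos fun j _ => hρpos j)
      (eventually_sum_ite_pow_transpose_mulVec_eq_zero (heig i) (hρpos i) hi.ne (hirr i hi) _ _)
  · have hempty : Finset.univ.filter (fun i => ρ i < 1) = ∅ :=
      Finset.filter_false_of_mem fun i _ hi => hcontracting ⟨i, hi⟩
    refine ⟨∑ q ∈ S ×ˢ T, ‖c q.1 * conj (d q.2)‖, by positivity, fun r => ?_⟩
    rw [hempty, Finset.prod_empty, one_pow, mul_one]
    exact norm_sum_ite_le _ _ _

/-- Exponential mixing of a lattice of coupled Arnol'd cat maps: let `M` be a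
`2n×2n` integer matrix whose real version is symmetric positive definite, with an
orthonormal eigenbasis `u_i`, `M·u_i = ρ_i·u_i`, `ρ_i > 0`, such that for every
contracting direction (`ρ_i < 1`) and every nonzero integer vector `k` one has
`k·u_i ≠ 0`.  Then for trigonometric polynomials `f, g` the correlation function
`C_r(f, g*) = ∫ f(M^r x)·conj(g(x)) dx − (∫ f)·conj(∫ g)` satisfies
`|C_r(f, g*)| ≤ K·(∏_{ρ_i < 1} ρ_i)^r = K·exp(−r·S_KS)`, so the mixing time is
`1/S_KS`, the inverse of the Kolmogorov–Sinai entropy. -/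
theorem acm_lattice_exponential_mixing (n : ℕ)
    (M : Matrix (Fin (2 * n)) (Fin (2 * n)) ℤ)
    (hsymm : (M.map (Int.cast : ℤ → ℝ)).IsSymm)
    (hpos : (M.map (Int.cast : ℤ → ℝ)).PosDef)
    (u : Fin (2 * n) → Fin (2 * n) → ℝ) (ρ : Fin (2 * n) → ℝ)
    (hortho : ∀ i j, (∑ t, u i t * u j t) = if i = j then (1 : ℝ) else 0)
    (heig : ∀ i, (M.map (Int.cast : ℤ → ℝ)).mulVec (u i) = ρ i • u i)
    (hρpos : ∀ i, 0 < ρ i)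
    (hirr : ∀ i, ρ i < 1 → ∀ k : Fin (2 * n) → ℤ, k ≠ 0 →
      (∑ t, (k t : ℝ) * u i t) ≠ 0)
    (f g : (Fin (2 * n) → ℝ) → ℂ)
    (hf : ∃ (S : Finset (Fin (2 * n) → ℤ)) (c : (Fin (2 * n) → ℤ) → ℂ), ∀ x, f x =
      ∑ k ∈ S, c k * Complex.exp
        (2 * Real.pi * Complex.I * ((∑ t, (k t : ℝ) * x t : ℝ) : ℂ)))
    (hg : ∃ (S : Finset (Fin (2 * n) → ℤ)) (c : (Fin (2 * n) → ℤ) → ℂ), ∀ x, g x =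
      ∑ k ∈ S, c k * Complex.exp
        (2 * Real.pi * Complex.I * ((∑ t, (k t : ℝ) * x t : ℝ) : ℂ))) :
    ∃ K : ℝ, 0 ≤ K ∧ ∀ r : ℕ,
      ‖(∫ x in Set.Icc (0 : Fin (2 * n) → ℝ) 1,
            f (((M.map (Int.cast : ℤ → ℝ)) ^ r).mulVec x) * (starRingEnd ℂ) (g x))
          - (∫ x in Set.Icc (0 : Fin (2 * n) → ℝ) 1, f x) *
              (starRingEnd ℂ) (∫ x in Set.Icc (0 : Fin (2 * n) → ℝ) 1, g x)‖
        ≤ K * (∏ i ∈ Finset.univ.filter (fun i => ρ i < 1), ρ i) ^ r :=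
  acm_lattice_exponential_mixing_general n M u ρ heig hρpos hirr f g hf hg
end
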